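/- Let f : ℝ^m → ℝ and g : ℝ^n → ℝ be convex, X ⊆ ℝ^m, Y ⊆ ℝ^n closed convex, A ∈ ℝ^{l×m}, B ∈ ℝ^{l×n}, c ∈ ℝ^l, τ ≠ 0, M = X × Y × ℝ^l, φ(x, y) = f(x) + g(y), J(x, y, λ) = τ(−Aᵀλ, −Bᵀλ, Ax + By − c), and let G be a symmetric positive definite (m+n+l)×(m+n+l) matrix. Suppose w̃^{k+1} ∈ M satisfies φ(u) − φ(ũ^{k+1}) + ⟨w − w̃^{k+1}, J(w̃^{k+1}) + G(w̃^{k+1} − w^k)⟩ ≥ 0 for all w ∈ M, let γ ∈ (0, 2), and set w^{k+1} = w^k + γ(w̃^{k+1} − w^k). Then for every solution w* ∈ M of the variational inequality (i.e., φ(u) − φ(u*) + ⟨w − w*, J(w*)⟩ ≥ 0 for all w ∈ M), ‖w^{k+1} − w*‖_G² ≤ ‖w^k − w*‖_G² − γ(2 − γ)‖w̃^{k+1} − w^k‖_G². -/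

import Mathlib

/-!
With `a = wᵏ - w*` and `b = w̃ᵏ⁺¹ - wᵏ` we have `wᵏ⁺¹ - w* = a + γ b`, and expanding
`‖a + γ b‖²_G` shows that the claim reduces to `⟨a + b, G b⟩ ≤ 0`. Testing the proximal
inequality at `w*` and the variational inequality at `w̃ᵏ⁺¹` and adding, the `φ`-terms cancel and
`⟨w̃ᵏ⁺¹ - w*, G b⟩ ≤ -⟨w̃ᵏ⁺¹ - w*, J w̃ᵏ⁺¹ - J w*⟩`, which vanishes because `J` is affine with a
skew-symmetric linear part.
-/

open Matrix

variable {ι κ ρ : Type*} [Fintype ι] [Fintype κ] [Fintype ρ]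

theorem Matrix.IsSymm.dotProduct_mulVec_comm {G : Matrix ι ι ℝ} (hG : G.IsSymm) (x y : ι → ℝ) :
    x ⬝ᵥ (G *ᵥ y) = y ⬝ᵥ (G *ᵥ x) := by
  rw [dotProduct_mulVec, ← vecMul_transpose, hG.eq, dotProduct_comm]

theorem Matrix.IsSymm.dotProduct_mulVec_add_smul {G : Matrix ι ι ℝ} (hG : G.IsSymm)
    (a b : ι → ℝ) (γ : ℝ) :
    (a + γ • b) ⬝ᵥ (G *ᵥ (a + γ • b)) =
      a ⬝ᵥ (G *ᵥ a) + 2 * γ * (a ⬝ᵥ (G *ᵥ b)) + γ ^ 2 * (b ⬝ᵥ (G *ᵥ b)) := by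
  simp only [mulVec_add, mulVec_smul, dotProduct_add, add_dotProduct, dotProduct_smul,
    smul_dotProduct, hG.dotProduct_mulVec_comm b a, smul_eq_mul]
  ring

theorem Matrix.IsSymm.relaxed_dotProduct_mulVec_le {G : Matrix ι ι ℝ} (hG : G.IsSymm)
    {a b : ι → ℝ} (hab : (a + b) ⬝ᵥ (G *ᵥ b) ≤ 0) {γ : ℝ} (hγ : 0 ≤ γ) :
    (a + γ • b) ⬝ᵥ (G *ᵥ (a + γ • b)) ≤
      a ⬝ᵥ (G *ᵥ a) - γ * (2 - γ) * (b ⬝ᵥ (G *ᵥ b)) := by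
  rw [add_dotProduct] at hab
  rw [hG.dotProduct_mulVec_add_smul]
  nlinarith [mul_le_mul_of_nonneg_left hab hγ]

def IsVISolution (M : Set (ι → ℝ)) (φ : (ι → ℝ) → ℝ) (F : (ι → ℝ) → ι → ℝ) (w : ι → ℝ) :
    Prop :=
  w ∈ M ∧ ∀ v ∈ M, φ v - φ w + (v - w) ⬝ᵥ F w ≥ 0

theorem IsVISolution.dotProduct_mulVec_nonpos {M : Set (ι → ℝ)} {φ : (ι → ℝ) → ℝ}
    {J : (ι → ℝ) → ι → ℝ} {G : Matrix ι ι ℝ} {w w' wstar : ι → ℝ}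
    (hw' : IsVISolution M φ (fun v => J v + G *ᵥ (v - w)) w')
    (hstar : IsVISolution M φ J wstar) (hJ : 0 ≤ (w' - wstar) ⬝ᵥ (J w' - J wstar)) :
    (w' - wstar) ⬝ᵥ (G *ᵥ (w' - w)) ≤ 0 := by
  have h₁ := hw'.2 wstar hstar.1
  have h₂ := hstar.2 w' hw'.1
  rw [← neg_sub w' wstar, neg_dotProduct, dotProduct_add] at h₁
  rw [dotProduct_sub] at hJ
  linarith

def saddleOperator (A : Matrix ρ ι ℝ) (B : Matrix ρ κ ℝ) (c : ρ → ℝ) (τ : ℝ)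
    (w : ι ⊕ κ ⊕ ρ → ℝ) : ι ⊕ κ ⊕ ρ → ℝ :=
  Sum.elim (τ • -(Aᵀ *ᵥ (w ∘ Sum.inr ∘ Sum.inr)))
    (Sum.elim (τ • -(Bᵀ *ᵥ (w ∘ Sum.inr ∘ Sum.inr)))
      (τ • (A *ᵥ (w ∘ Sum.inl) + B *ᵥ (w ∘ Sum.inr ∘ Sum.inl) - c)))

theorem saddleOperator_sub (A : Matrix ρ ι ℝ) (B : Matrix ρ κ ℝ) (c : ρ → ℝ) (τ : ℝ)
    (u v : ι ⊕ κ ⊕ ρ → ℝ) :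
    saddleOperator A B c τ u - saddleOperator A B c τ v = τ • saddleOperator A B 0 1 (u - v) := by
  ext (i | j | k) <;>
    simp only [saddleOperator, Pi.sub_comp, mulVec_sub, Pi.sub_apply, Pi.neg_apply, Pi.add_apply,
      Pi.smul_apply, Sum.elim_inl, Sum.elim_inr, smul_eq_mul, one_smul, sub_zero] <;>
    ring

theorem dotProduct_saddleOperator_zero_one_self (A : Matrix ρ ι ℝ) (B : Matrix ρ κ ℝ)
    (p : ι ⊕ κ ⊕ ρ → ℝ) : p ⬝ᵥ saddleOperator A B 0 1 p = 0 := by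
  rw [← Sum.elim_comp_inl_inr p, ← Sum.elim_comp_inl_inr (p ∘ Sum.inr)]
  simp only [saddleOperator, Sum.elim_comp_inl, Sum.elim_comp_inr, ← Function.comp_assoc,
    sumElim_dotProduct_sumElim, one_smul, sub_zero, dotProduct_neg, dotProduct_add,
    dotProduct_mulVec _ Aᵀ, dotProduct_mulVec _ Bᵀ, vecMul_transpose]
  rw [dotProduct_comm (A *ᵥ _), dotProduct_comm (B *ᵥ _)]
  ring

theorem sub_dotProduct_saddleOperator_sub (A : Matrix ρ ι ℝ) (B : Matrix ρ κ ℝ) (c : ρ → ℝ)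
    (τ : ℝ) (u v : ι ⊕ κ ⊕ ρ → ℝ) :
    (u - v) ⬝ᵥ (saddleOperator A B c τ u - saddleOperator A B c τ v) = 0 := by
  rw [saddleOperator_sub, dotProduct_smul, dotProduct_saddleOperator_zero_one_self, smul_zero]

theorem stmt12_general {m n l : ℕ}
    (A : Matrix (Fin l) (Fin m) ℝ) (B : Matrix (Fin l) (Fin n) ℝ)
    (c : Fin l → ℝ) (τ : ℝ)
    (M : Set ((Fin m ⊕ (Fin n ⊕ Fin l)) → ℝ))
    (φ : ((Fin m ⊕ (Fin n ⊕ Fin l)) → ℝ) → ℝ)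
    (J : ((Fin m ⊕ (Fin n ⊕ Fin l)) → ℝ) → ((Fin m ⊕ (Fin n ⊕ Fin l)) → ℝ))
    (hJ : J = fun w => Sum.elim (τ • (-(Aᵀ *ᵥ (w ∘ Sum.inr ∘ Sum.inr))))
        (Sum.elim (τ • (-(Bᵀ *ᵥ (w ∘ Sum.inr ∘ Sum.inr))))
          (τ • (A *ᵥ (w ∘ Sum.inl) + B *ᵥ (w ∘ Sum.inr ∘ Sum.inl) - c))))
    (G : Matrix (Fin m ⊕ (Fin n ⊕ Fin l)) (Fin m ⊕ (Fin n ⊕ Fin l)) ℝ)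
    (hG : G.PosDef)
    (wk wtilde : (Fin m ⊕ (Fin n ⊕ Fin l)) → ℝ) (hwtilde : wtilde ∈ M)
    (hineq : ∀ w ∈ M,
      φ w - φ wtilde + (w - wtilde) ⬝ᵥ (J wtilde + G *ᵥ (wtilde - wk)) ≥ 0)
    (γ : ℝ) (hγ₀ : 0 < γ)
    (wk1 : (Fin m ⊕ (Fin n ⊕ Fin l)) → ℝ)
    (hwk1 : wk1 = wk + γ • (wtilde - wk))
    (wstar : (Fin m ⊕ (Fin n ⊕ Fin l)) → ℝ) (hwstarM : wstar ∈ M)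
    (hwstar : ∀ w ∈ M, φ w - φ wstar + (w - wstar) ⬝ᵥ J wstar ≥ 0) :
    (wk1 - wstar) ⬝ᵥ (G *ᵥ (wk1 - wstar)) ≤
      (wk - wstar) ⬝ᵥ (G *ᵥ (wk - wstar)) -
        γ * (2 - γ) * ((wtilde - wk) ⬝ᵥ (G *ᵥ (wtilde - wk))) := by
  subst hJ hwk1
  have hJ_skew : 0 ≤ (wtilde - wstar) ⬝ᵥ
      (saddleOperator A B c τ wtilde - saddleOperator A B c τ wstar) :=
    (sub_dotProduct_saddleOperator_sub A B c τ wtilde wstar).ge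
  have hprox : (wtilde - wstar) ⬝ᵥ (G *ᵥ (wtilde - wk)) ≤ 0 :=
    IsVISolution.dotProduct_mulVec_nonpos ⟨hwtilde, hineq⟩ ⟨hwstarM, hwstar⟩ hJ_skew
  have hsplit : wk + γ • (wtilde - wk) - wstar = (wk - wstar) + γ • (wtilde - wk) := by abel
  rw [hsplit]
  exact (isHermitian_iff_isSymm.mp hG.isHermitian).relaxed_dotProduct_mulVec_le
    (by rwa [sub_add_sub_cancel']) hγ₀.le

/-- contraction inequality for the relaxed proximal point step
with relaxation factor `γ ∈ (0, 2)`. -/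
theorem stmt12 {m n l : ℕ}
    (f : (Fin m → ℝ) → ℝ) (g : (Fin n → ℝ) → ℝ)
    (hf : ConvexOn ℝ Set.univ f) (hg : ConvexOn ℝ Set.univ g)
    (X : Set (Fin m → ℝ)) (Y : Set (Fin n → ℝ))
    (hXcl : IsClosed X) (hXcv : Convex ℝ X) (hYcl : IsClosed Y) (hYcv : Convex ℝ Y)
    (A : Matrix (Fin l) (Fin m) ℝ) (B : Matrix (Fin l) (Fin n) ℝ)
    (c : Fin l → ℝ) (τ : ℝ) (hτ : τ ≠ 0)
    (M : Set ((Fin m ⊕ (Fin n ⊕ Fin l)) → ℝ))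
    (hM : M = {w | (w ∘ Sum.inl) ∈ X ∧ (w ∘ Sum.inr ∘ Sum.inl) ∈ Y})
    (φ : ((Fin m ⊕ (Fin n ⊕ Fin l)) → ℝ) → ℝ)
    (hφ : φ = fun w => f (w ∘ Sum.inl) + g (w ∘ Sum.inr ∘ Sum.inl))
    (J : ((Fin m ⊕ (Fin n ⊕ Fin l)) → ℝ) → ((Fin m ⊕ (Fin n ⊕ Fin l)) → ℝ))
    (hJ : J = fun w => Sum.elim (τ • (-(Aᵀ *ᵥ (w ∘ Sum.inr ∘ Sum.inr))))
        (Sum.elim (τ • (-(Bᵀ *ᵥ (w ∘ Sum.inr ∘ Sum.inr))))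
          (τ • (A *ᵥ (w ∘ Sum.inl) + B *ᵥ (w ∘ Sum.inr ∘ Sum.inl) - c))))
    (G : Matrix (Fin m ⊕ (Fin n ⊕ Fin l)) (Fin m ⊕ (Fin n ⊕ Fin l)) ℝ)
    (hG : G.PosDef)
    (wk wtilde : (Fin m ⊕ (Fin n ⊕ Fin l)) → ℝ) (hwtilde : wtilde ∈ M)
    (hineq : ∀ w ∈ M,
      φ w - φ wtilde + (w - wtilde) ⬝ᵥ (J wtilde + G *ᵥ (wtilde - wk)) ≥ 0)
    (γ : ℝ) (hγ₀ : 0 < γ) (hγ₂ : γ < 2)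
    (wk1 : (Fin m ⊕ (Fin n ⊕ Fin l)) → ℝ)
    (hwk1 : wk1 = wk + γ • (wtilde - wk))
    (wstar : (Fin m ⊕ (Fin n ⊕ Fin l)) → ℝ) (hwstarM : wstar ∈ M)
    (hwstar : ∀ w ∈ M, φ w - φ wstar + (w - wstar) ⬝ᵥ J wstar ≥ 0) :
    (wk1 - wstar) ⬝ᵥ (G *ᵥ (wk1 - wstar)) ≤
      (wk - wstar) ⬝ᵥ (G *ᵥ (wk - wstar)) -
        γ * (2 - γ) * ((wtilde - wk) ⬝ᵥ (G *ᵥ (wtilde - wk))) :=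
  stmt12_general A B c τ M φ J hJ G hG wk wtilde hwtilde hineq γ hγ₀ wk1 hwk1 wstar hwstarM hwstar
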